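/- arXiv:2211.05554 — 2 statements merged into one kernel-verified Lean document; each statement's English description precedes it below -/
import Mathlib

section
/- Convergence of SmartFL under poisoning attacks (Property 1 / appendix Property 3). Let E be a real inner product space and let L, Ls : E → ℝ be differentiable. Assume: (i) ∇L is Lc-Lipschitz for some Lc > 0; (ii) w* ∈ E is a global minimizer of L and L satisfies the PL inequality with constant μ > 0 at w*; (iii) ‖∇L(w)‖² ≤ V1 and ‖∇Ls(w)‖² ≤ V1 for all w ∈ E, where V1 > 0; (iv) ‖∇Ls(w) − ∇L(w)‖² ≤ V3 for all w ∈ E, where V3 ≥ 0; (v) |L(w) − Ls(w)| ≤ δ/2 for all w ∈ E, where δ ≥ 0. Let w : ℕ → E (global models) and Δ : ℕ → E (honest-client updates), and let γ > 0, ε ≥ 0, 0 < η ≤ 1, V2 > 0 be such that for every round t: (a) ⟨∇Ls(w t), Δ t⟩ + γ‖∇Ls(w t)‖² ≤ ε; (b) ‖Δ t‖ ≤ η‖∇Ls(w t)‖; (c) ‖∇Ls(w t)‖² ≥ V2; (d) Ls(w (t+1)) ≤ Ls(w t + Δ t). Set ρ = 1 − 2μγV2/V1 and assume 0 < ρ <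 1. Then for every T ≥ 0: L(w T) − L(w*) ≤ ρ^T · (L(w 0) − L(w*)) + (V1/(2μγV2)) · (η·(V3/2 + (Lc + 1)·V1/2) + ε + δ). In particular the optimization error converges linearly to a quantity of order η·(V3 + V1) + ε + δ. -/
/-!
Per round, the descent lemma for the `Lc`-smooth `L` along the honest update `Δ t`, with `∇L`
replaced by the proxy gradient `∇Ls` at a cost `η (V3 + V1) / 2`, shows that `L` decreases by
about `γ ‖∇Ls‖²`; condition (d) together with `|L - Ls| ≤ δ / 2` carries this decrease over to
`w (t + 1)` at a further cost `δ`. The PL inequality with `‖∇L‖² ≤ V1` bounds the gap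
`a t = L (w t) - L wstar` by `V1 / (2μ)`, so `(1 - ρ) a t ≤ γ V2 ≤ γ ‖∇Ls (w t)‖²`. Hence
`a (t + 1) ≤ ρ a t + C`, and unrolling gives `a T ≤ ρ ^ T a 0 + C / (1 - ρ)`.
-/

open scoped RealInnerProductSpace

theorem le_add_fderiv_add_of_lipschitz_fderiv {F : Type*} [NormedAddCommGroup F]
    [NormedSpace ℝ F] {f : F → ℝ} (hf : Differentiable ℝ f) {K : ℝ}
    (hK : ∀ u v, ‖fderiv ℝ f u - fderiv ℝ f v‖ ≤ K * ‖u - v‖) (x d : F) :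
    f (x + d) ≤ f x + fderiv ℝ f x d + K / 2 * ‖d‖ ^ 2 := by
  set φ : ℝ → ℝ := fun s => f (x + s • d) - s * fderiv ℝ f x d - K / 2 * s ^ 2 * ‖d‖ ^ 2
  have hφ : ∀ s, HasDerivAt φ (fderiv ℝ f (x + s • d) d - fderiv ℝ f x d - K * s * ‖d‖ ^ 2) s := by
    intro s
    have hline : HasDerivAt (fun s : ℝ => x + s • d) d s := by
      simpa using ((hasDerivAt_id s).smul_const d).const_add x
    refine ((((hf _).hasFDerivAt.comp_hasDerivAt s hline).sub
      ((hasDerivAt_id s).mul_const (fderiv ℝ f x d))).sub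
      (((hasDerivAt_pow 2 s).const_mul (K / 2)).mul_const (‖d‖ ^ 2))).congr_deriv ?_
    ring
  have hanti : AntitoneOn φ (Set.Icc 0 1) := by
    refine antitoneOn_of_hasDerivWithinAt_nonpos (convex_Icc 0 1)
      (fun s _ => (hφ s).continuousAt.continuousWithinAt) (fun s _ => (hφ s).hasDerivWithinAt)
      fun s hs => ?_
    rw [interior_Icc] at hs
    have hslope : fderiv ℝ f (x + s • d) d - fderiv ℝ f x d ≤ K * s * ‖d‖ ^ 2 :=
      calc (fderiv ℝ f (x + s • d) - fderiv ℝ f x) d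
          ≤ ‖fderiv ℝ f (x + s • d) - fderiv ℝ f x‖ * ‖d‖ :=
            (le_abs_self _).trans ((fderiv ℝ f (x + s • d) - fderiv ℝ f x).le_opNorm d)
        _ ≤ K * ‖s • d‖ * ‖d‖ := by gcongr; simpa using hK (x + s • d) x
        _ = K * s * ‖d‖ ^ 2 := by rw [norm_smul, Real.norm_of_nonneg hs.1.le]; ring
    linarith
  have h10 : φ 1 ≤ φ 0 := hanti ⟨le_rfl, zero_le_one⟩ ⟨zero_le_one, le_rfl⟩ zero_le_one
  norm_num [φ] at h10
  linarith

theorem le_add_inner_gradient_add_of_lipschitz_gradient {E : Type*} [NormedAddCommGroup E]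
    [InnerProductSpace ℝ E] [CompleteSpace E] {f : E → ℝ} (hf : Differentiable ℝ f) {K : ℝ}
    (hK : ∀ u v, ‖gradient f u - gradient f v‖ ≤ K * ‖u - v‖) (x d : E) :
    f (x + d) ≤ f x + ⟪gradient f x, d⟫ + K / 2 * ‖d‖ ^ 2 := by
  have hfderiv : ∀ u, fderiv ℝ f u = InnerProductSpace.toDual ℝ E (gradient f u) := by
    simp [gradient]
  refine (le_add_fderiv_add_of_lipschitz_fderiv hf (K := K) (fun u v => ?_) x d).trans_eq ?_
  · rw [hfderiv, hfderiv, ← map_sub, LinearIsometryEquiv.norm_map]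
    exact hK u v
  · rw [hfderiv, InnerProductSpace.toDual_apply_apply]

theorem le_add_inner_add_of_norm_le_mul_norm {E : Type*} [NormedAddCommGroup E]
    [InnerProductSpace ℝ E] [CompleteSpace E] {f : E → ℝ} (hf : Differentiable ℝ f) {K : ℝ}
    (hK₀ : 0 ≤ K) (hK : ∀ u v, ‖gradient f u - gradient f v‖ ≤ K * ‖u - v‖)
    {x d g : E} {η V₁ V₃ : ℝ} (hη₀ : 0 ≤ η) (hη₁ : η ≤ 1) (hd : ‖d‖ ≤ η * ‖g‖)
    (hg : ‖g‖ ^ 2 ≤ V₁) (hgf : ‖g - gradient f x‖ ^ 2 ≤ V₃) :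
    f (x + d) ≤ f x + ⟪g, d⟫ + η * (V₃ / 2 + (K + 1) * V₁ / 2) := by
  have hinner : ⟪gradient f x - g, d⟫ ≤ η * (V₃ / 2 + V₁ / 2) :=
    calc ⟪gradient f x - g, d⟫ ≤ ‖gradient f x - g‖ * ‖d‖ := real_inner_le_norm _ _
      _ ≤ η * (‖g - gradient f x‖ * ‖g‖) := by
        rw [norm_sub_rev]; nlinarith [norm_nonneg (g - gradient f x)]
      _ ≤ η * (V₃ / 2 + V₁ / 2) := by
        gcongr; nlinarith [two_mul_le_add_sq ‖g - gradient f x‖ ‖g‖]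
  have hd_sq : ‖d‖ ^ 2 ≤ η * V₁ :=
    calc ‖d‖ ^ 2 ≤ (η * ‖g‖) ^ 2 := by gcongr
      _ = η ^ 2 * ‖g‖ ^ 2 := by ring
      _ ≤ η * V₁ := by gcongr; nlinarith
  have hdescent := le_add_inner_gradient_add_of_lipschitz_gradient hf hK x d
  rw [inner_sub_left] at hinner
  nlinarith [mul_le_mul_of_nonneg_left hd_sq hK₀]

theorem le_add_of_abs_sub_le_half {α : Type*} {f g : α → ℝ} {δ : ℝ}
    (h : ∀ v, |f v - g v| ≤ δ / 2) {y z : α} (hyz : g y ≤ g z) : f y ≤ f z + δ := by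
  linarith [(abs_le.1 (h y)).2, (abs_le.1 (h z)).1]

theorem le_pow_mul_add_div_of_le_mul_add {a : ℕ → ℝ} {ρ C : ℝ} (hρ₀ : 0 ≤ ρ) (hρ₁ : ρ < 1)
    (hC : 0 ≤ C) (h : ∀ t, a (t + 1) ≤ ρ * a t + C) (T : ℕ) :
    a T ≤ ρ ^ T * a 0 + C / (1 - ρ) := by
  have h1ρ : 0 < 1 - ρ := sub_pos.2 hρ₁
  induction T with
  | zero => simpa using div_nonneg hC h1ρ.le
  | succ T ih =>
    calc a (T + 1) ≤ ρ * (ρ ^ T * a 0 + C / (1 - ρ)) + C := (h T).trans (by gcongr)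
      _ = ρ ^ (T + 1) * a 0 + C / (1 - ρ) := by field_simp; ring

theorem smartfl_convergence_general
    {E : Type*} [NormedAddCommGroup E] [InnerProductSpace ℝ E] [CompleteSpace E]
    (L Ls : E → ℝ) (hL : Differentiable ℝ L)
    (Lc : ℝ) (hLc : 0 < Lc)
    (hLip : ∀ u v : E, ‖gradient L u - gradient L v‖ ≤ Lc * ‖u - v‖)
    (wstar : E)
    (μ : ℝ) (hμ : 0 < μ)
    (hPL : ∀ v : E, L v - L wstar ≤ ‖gradient L v‖ ^ 2 / (2 * μ))
    (V1 : ℝ) (hV1 : 0 < V1)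
    (hgL : ∀ v : E, ‖gradient L v‖ ^ 2 ≤ V1)
    (hgLs : ∀ v : E, ‖gradient Ls v‖ ^ 2 ≤ V1)
    (V3 : ℝ) (hV3 : 0 ≤ V3)
    (hgdiff : ∀ v : E, ‖gradient Ls v - gradient L v‖ ^ 2 ≤ V3)
    (δ : ℝ) (hδ : 0 ≤ δ)
    (hgap : ∀ v : E, |L v - Ls v| ≤ δ / 2)
    (w : ℕ → E) (Δ : ℕ → E)
    (γ : ℝ) (hγ : 0 < γ) (ε : ℝ) (hε : 0 ≤ ε)
    (η : ℝ) (hη0 : 0 < η) (hη1 : η ≤ 1)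
    (V2 : ℝ) (hV2 : 0 < V2)
    (ha : ∀ t : ℕ, ⟪gradient Ls (w t), Δ t⟫ + γ * ‖gradient Ls (w t)‖ ^ 2 ≤ ε)
    (hb : ∀ t : ℕ, ‖Δ t‖ ≤ η * ‖gradient Ls (w t)‖)
    (hc : ∀ t : ℕ, V2 ≤ ‖gradient Ls (w t)‖ ^ 2)
    (hd : ∀ t : ℕ, Ls (w (t + 1)) ≤ Ls (w t + Δ t))
    (ρ : ℝ) (hρ : ρ = 1 - 2 * μ * γ * V2 / V1)
    (hρ0 : 0 < ρ) (hρ1 : ρ < 1) :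
    ∀ T : ℕ, L (w T) - L wstar ≤
      ρ ^ T * (L (w 0) - L wstar) +
        (V1 / (2 * μ * γ * V2)) * (η * (V3 / 2 + (Lc + 1) * V1 / 2) + ε + δ) := by
  intro T
  set C := η * (V3 / 2 + (Lc + 1) * V1 / 2) + ε + δ with hC
  have h1ρ : 1 - ρ = 2 * μ * γ * V2 / V1 := by rw [hρ]; ring
  have step : ∀ t, L (w (t + 1)) - L wstar ≤ ρ * (L (w t) - L wstar) + C := by
    intro t
    have hdecrease := le_add_inner_add_of_norm_le_mul_norm hL hLc.le hLip hη0.le hη1 (hb t)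
      (hgLs (w t)) (hgdiff (w t))
    have hproxy := le_add_of_abs_sub_le_half hgap (hd t)
    have hcontract : (1 - ρ) * (L (w t) - L wstar) ≤ γ * V2 :=
      calc (1 - ρ) * (L (w t) - L wstar)
          ≤ 2 * μ * γ * V2 / V1 * (V1 / (2 * μ)) := by
            rw [h1ρ]; gcongr; exact (hPL (w t)).trans (by gcongr; exact hgL (w t))
        _ = γ * V2 := by field_simp
    linarith [ha t, mul_le_mul_of_nonneg_left (hc t) hγ.le]
  calc L (w T) - L wstar ≤ ρ ^ T * (L (w 0) - L wstar) + C / (1 - ρ) :=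
        le_pow_mul_add_div_of_le_mul_add (a := fun t => L (w t) - L wstar) hρ0.le hρ1
          (by positivity) step T
    _ = _ := by rw [h1ρ, div_div_eq_mul_div]; ring

/-- Convergence of SmartFL under poisoning attacks (Property 1). -/
theorem smartfl_convergence
    {E : Type*} [NormedAddCommGroup E] [InnerProductSpace ℝ E] [CompleteSpace E]
    (L Ls : E → ℝ) (hL : Differentiable ℝ L) (hLs : Differentiable ℝ Ls)
    (Lc : ℝ) (hLc : 0 < Lc)
    (hLip : ∀ u v : E, ‖gradient L u - gradient L v‖ ≤ Lc * ‖u - v‖)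
    (wstar : E) (hmin : ∀ v : E, L wstar ≤ L v)
    (μ : ℝ) (hμ : 0 < μ)
    (hPL : ∀ v : E, L v - L wstar ≤ ‖gradient L v‖ ^ 2 / (2 * μ))
    (V1 : ℝ) (hV1 : 0 < V1)
    (hgL : ∀ v : E, ‖gradient L v‖ ^ 2 ≤ V1)
    (hgLs : ∀ v : E, ‖gradient Ls v‖ ^ 2 ≤ V1)
    (V3 : ℝ) (hV3 : 0 ≤ V3)
    (hgdiff : ∀ v : E, ‖gradient Ls v - gradient L v‖ ^ 2 ≤ V3)
    (δ : ℝ) (hδ : 0 ≤ δ)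
    (hgap : ∀ v : E, |L v - Ls v| ≤ δ / 2)
    (w : ℕ → E) (Δ : ℕ → E)
    (γ : ℝ) (hγ : 0 < γ) (ε : ℝ) (hε : 0 ≤ ε)
    (η : ℝ) (hη0 : 0 < η) (hη1 : η ≤ 1)
    (V2 : ℝ) (hV2 : 0 < V2)
    (ha : ∀ t : ℕ, ⟪gradient Ls (w t), Δ t⟫ + γ * ‖gradient Ls (w t)‖ ^ 2 ≤ ε)
    (hb : ∀ t : ℕ, ‖Δ t‖ ≤ η * ‖gradient Ls (w t)‖)
    (hc : ∀ t : ℕ, V2 ≤ ‖gradient Ls (w t)‖ ^ 2)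
    (hd : ∀ t : ℕ, Ls (w (t + 1)) ≤ Ls (w t + Δ t))
    (ρ : ℝ) (hρ : ρ = 1 - 2 * μ * γ * V2 / V1)
    (hρ0 : 0 < ρ) (hρ1 : ρ < 1) :
    ∀ T : ℕ, L (w T) - L wstar ≤
      ρ ^ T * (L (w 0) - L wstar) +
        (V1 / (2 * μ * γ * V2)) * (η * (V3 / 2 + (Lc + 1) * V1 / 2) + ε + δ) :=
  smartfl_convergence_general L Ls hL Lc hLc hLip wstar μ hμ hPL V1 hV1 hgL hgLs V3 hV3 hgdiff δ hδ
    hgap w Δ γ hγ ε hε η hη0 hη1 V2 hV2 ha hb hc hd ρ hρ hρ0 hρ1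
end

section
/- Inner-product bound for the global gradient along an honest update (key step in the convergence proof). Let E be a real inner product space and let g, gs, Δ ∈ E (representing ∇L(w), ∇Ls(w), and the honest client's update, respectively). Let γ ≥ 0, ε ∈ ℝ, η ≥ 0, V1 > 0, V2 ≥ 0, V3 ≥ 0 satisfy: (a) ⟨gs, Δ⟩ ≤ −γ‖gs‖² + ε; (b) ‖Δ‖ ≤ η‖gs‖; (c) ‖g‖² ≤ V1; (d) ‖gs‖² ≤ V1; (e) ‖gs‖² ≥ V2; (f) ‖g − gs‖² ≤ V3. Then ⟨g, Δ⟩ ≤ −γ·(V2/V1)·‖g‖² + (η/2)·V1 + (η/2)·V3 + ε. -/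
open scoped RealInnerProductSpace

/-- Inner-product bound for the global gradient along an honest update. -/
theorem smartfl_inner_product_bound
    {E : Type*} [NormedAddCommGroup E] [InnerProductSpace ℝ E]
    (g gs Δ : E)
    (γ : ℝ) (hγ : 0 ≤ γ) (ε : ℝ) (η : ℝ) (hη : 0 ≤ η)
    (V1 : ℝ) (hV1 : 0 < V1) (V2 : ℝ) (hV2 : 0 ≤ V2) (V3 : ℝ) (hV3 : 0 ≤ V3)
    (ha : ⟪gs, Δ⟫ ≤ -γ * ‖gs‖ ^ 2 + ε)
    (hb : ‖Δ‖ ≤ η * ‖gs‖)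
    (hc : ‖g‖ ^ 2 ≤ V1)
    (hd : ‖gs‖ ^ 2 ≤ V1)
    (he : V2 ≤ ‖gs‖ ^ 2)
    (hf : ‖g - gs‖ ^ 2 ≤ V3) :
    ⟪g, Δ⟫ ≤ -(γ * (V2 / V1)) * ‖g‖ ^ 2 + (η / 2) * V1 + (η / 2) * V3 + ε := by
  have hsplit : ⟪g, Δ⟫ = ⟪gs, Δ⟫ + ⟪g - gs, Δ⟫ := by
    rw [inner_sub_left]; ring
  have hcs : ⟪g - gs, Δ⟫ ≤ ‖g - gs‖ * ‖Δ‖ := real_inner_le_norm _ _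
  have hn1 : (0:ℝ) ≤ ‖g - gs‖ := norm_nonneg _
  have hn2 : (0:ℝ) ≤ ‖gs‖ := norm_nonneg _
  have hn3 : (0:ℝ) ≤ ‖Δ‖ := norm_nonneg _
  have h2 : ‖g - gs‖ * ‖Δ‖ ≤ ‖g - gs‖ * (η * ‖gs‖) :=
    mul_le_mul_of_nonneg_left hb hn1
  have hamgm : ‖g - gs‖ * (η * ‖gs‖) ≤ (η / 2) * ‖gs‖ ^ 2 + (η / 2) * ‖g - gs‖ ^ 2 := by
    nlinarith [sq_nonneg (‖g - gs‖ - ‖gs‖)]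
  have hlast : γ * (V2 / V1) * ‖g‖ ^ 2 ≤ γ * V2 := by
    have : V2 / V1 * ‖g‖ ^ 2 ≤ V2 := by
      rw [div_mul_eq_mul_div, div_le_iff₀ hV1]
      nlinarith
    nlinarith
  have hgs : -γ * ‖gs‖ ^ 2 ≤ -(γ * V2) := by nlinarith
  nlinarith [mul_le_mul_of_nonneg_left hd (by linarith : (0:ℝ) ≤ η/2),
    mul_le_mul_of_nonneg_left hf (by linarith : (0:ℝ) ≤ η/2)]
end
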